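/- Let R be an associative ring with unit and (𝒯, 𝒮) a hereditary Tor-pair. If T ∈ 𝒯 and K is an 𝒮-pure submodule of T, then K ∈ 𝒯. -/

import Mathlib

open TensorProduct MulOpposite CategoryTheory

universe u

section Preliminaries

/-- A class of modules over the ring `A` (for `A = Rᵐᵒᵖ` these are right `R`-modules,
for `A = R` left `R`-modules). -/
abbrev ModClass (A : Type u) [Ring A] : Type (u + 1) :=
  ∀ (M : Type u) [AddCommGroup M] [Module A M], Prop

variable (R : Type u) [Ring R]

/-- The subgroup of relations defining the balanced tensor product `M ⊗_R N` of a
right `R`-module `M` and a left `R`-module `N`. -/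
def torRel (M : Type u) [AddCommGroup M] [Module Rᵐᵒᵖ M]
    (N : Type u) [AddCommGroup N] [Module R N] : Submodule ℤ (TensorProduct ℤ M N) :=
  Submodule.span ℤ
    {x | ∃ (r : R) (m : M) (n : N), x = (op r • m) ⊗ₜ[ℤ] n - m ⊗ₜ[ℤ] (r • n)}

/-- The balanced tensor product `M ⊗_R N` of a right `R`-module `M` and a left
`R`-module `N`, as an abelian group (`ℤ`-module). -/
abbrev BTen (M : Type u) [AddCommGroup M] [Module Rᵐᵒᵖ M]
    (N : Type u) [AddCommGroup N] [Module R N] : Type u :=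
  TensorProduct ℤ M N ⧸ torRel R M N

/-- Functoriality of the balanced tensor product in the first (right-module) variable:
the map `f ⊗ id_N`. -/
noncomputable def btMapL {M M' : Type u} [AddCommGroup M] [Module Rᵐᵒᵖ M]
    [AddCommGroup M'] [Module Rᵐᵒᵖ M'] (N : Type u) [AddCommGroup N] [Module R N]
    (f : M →ₗ[Rᵐᵒᵖ] M') : BTen R M N →ₗ[ℤ] BTen R M' N :=
  Submodule.mapQ _ _ (TensorProduct.map f.toAddMonoidHom.toIntLinearMap LinearMap.id)
    (by
      rw [torRel, Submodule.span_le]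
      rintro _ ⟨r, m, n, rfl⟩
      refine Submodule.subset_span ⟨r, f m, n, ?_⟩
      erw [map_sub, TensorProduct.map_tmul, TensorProduct.map_tmul]
      simp [map_smul])

/-- Functoriality of the balanced tensor product in the second (left-module) variable:
the map `id_M ⊗ g`. -/
noncomputable def btMapR (M : Type u) [AddCommGroup M] [Module Rᵐᵒᵖ M]
    {N N' : Type u} [AddCommGroup N] [Module R N] [AddCommGroup N'] [Module R N']
    (g : N →ₗ[R] N') : BTen R M N →ₗ[ℤ] BTen R M N' :=
  Submodule.mapQ _ _ (TensorProduct.map LinearMap.id g.toAddMonoidHom.toIntLinearMap)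
    (by
      rw [torRel, Submodule.span_le]
      rintro _ ⟨r, m, n, rfl⟩
      refine Submodule.subset_span ⟨r, m, g n, ?_⟩
      erw [map_sub, TensorProduct.map_tmul, TensorProduct.map_tmul]
      simp [map_smul])

/-- The functor `- ⊗_R N : Mod-R ⥤ Ab` (realized with values in `ℤ`-modules)
given by the balanced tensor product with a fixed left `R`-module `N`. -/
noncomputable def tenFunctor (N : Type u) [AddCommGroup N] [Module R N] :
    ModuleCat.{u} Rᵐᵒᵖ ⥤ ModuleCat.{u} ℤ where
  obj M := ModuleCat.of ℤ (BTen R M N)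
  map {M M'} f := ModuleCat.ofHom (btMapL R N f.hom)
  map_id M := by
    apply ModuleCat.hom_ext
    apply Submodule.linearMap_qext
    apply TensorProduct.ext'
    intro m n
    rfl
  map_comp {M M' M''} f g := by
    apply ModuleCat.hom_ext
    apply Submodule.linearMap_qext
    apply TensorProduct.ext'
    intro m n
    rfl

lemma btMapL_add {M M' : Type u} [AddCommGroup M] [Module Rᵐᵒᵖ M]
    [AddCommGroup M'] [Module Rᵐᵒᵖ M'] (N : Type u) [AddCommGroup N] [Module R N]
    (f g : M →ₗ[Rᵐᵒᵖ] M') : btMapL R N (f + g) = btMapL R N f + btMapL R N g := by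
  apply Submodule.linearMap_qext
  apply TensorProduct.ext'
  intro m n
  change (Submodule.Quotient.mk ((f + g) m ⊗ₜ[ℤ] n) : BTen R M' N) =
    Submodule.Quotient.mk (f m ⊗ₜ[ℤ] n) + Submodule.Quotient.mk (g m ⊗ₜ[ℤ] n)
  erw [LinearMap.add_apply, TensorProduct.add_tmul, Submodule.Quotient.mk_add]

noncomputable instance tenFunctorAdditive (N : Type u) [AddCommGroup N] [Module R N] :
    (tenFunctor R N).Additive where
  map_add {_ _} {f g} := by
    apply ModuleCat.hom_ext
    simp only [tenFunctor, ModuleCat.hom_add, ModuleCat.hom_ofHom]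
    exact btMapL_add R N f.hom g.hom

/-- `Tor_n^R(M, N) = 0`, where `Tor_n^R(-, N)` is the `n`-th left derived functor of the
balanced tensor product functor `- ⊗_R N`. -/
def TorVanish (n : ℕ) (M : Type u) [AddCommGroup M] [Module Rᵐᵒᵖ M]
    (N : Type u) [AddCommGroup N] [Module R N] : Prop :=
  Limits.IsZero (((tenFunctor R N).leftDerived n).obj (ModuleCat.of Rᵐᵒᵖ M))

/-- `(𝒯, 𝒮)` is a Tor-pair: `𝒯 = ⊤𝒮` and `𝒮 = 𝒯⊤`, where orthogonality is with respect
to the vanishing of `Tor₁`. -/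
def IsTorPair (𝒯 : ModClass Rᵐᵒᵖ) (𝒮 : ModClass R) : Prop :=
  (∀ (M : Type u) [AddCommGroup M] [Module Rᵐᵒᵖ M],
      𝒯 M ↔ ∀ (S : Type u) [AddCommGroup S] [Module R S], 𝒮 S → TorVanish R 1 M S) ∧
  (∀ (S : Type u) [AddCommGroup S] [Module R S],
      𝒮 S ↔ ∀ (M : Type u) [AddCommGroup M] [Module Rᵐᵒᵖ M], 𝒯 M → TorVanish R 1 M S)

variable {R}

/-- A class of modules is resolving if it contains all projective modules and is closed
under extensions and under kernels of epimorphisms between its members. -/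
def Resolving {A : Type u} [Ring A] (𝒞 : ModClass A) : Prop :=
  (∀ (P : Type u) [AddCommGroup P] [Module A P], Module.Projective A P → 𝒞 P) ∧
  (∀ (M₁ M₂ M₃ : Type u) [AddCommGroup M₁] [Module A M₁] [AddCommGroup M₂] [Module A M₂]
      [AddCommGroup M₃] [Module A M₃] (f : M₁ →ₗ[A] M₂) (g : M₂ →ₗ[A] M₃),
      Function.Injective f → Function.Exact f g → Function.Surjective g →
      𝒞 M₁ → 𝒞 M₃ → 𝒞 M₂) ∧
  (∀ (M₂ M₃ : Type u) [AddCommGroup M₂] [Module A M₂] [AddCommGroup M₃] [Module A M₃]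
      (g : M₂ →ₗ[A] M₃), Function.Surjective g → 𝒞 M₂ → 𝒞 M₃ → 𝒞 (LinearMap.ker g))

/-- `DimLE 𝒞 n M` means that the `𝒞`-projective dimension of `M` is at most `n`: some
projective resolution of `M` has its `(n-1)`-st syzygy in `𝒞` (for `n = 0`, `M ∈ 𝒞`). -/
def DimLE {A : Type u} [Ring A] (𝒞 : ModClass A) : ℕ → ModClass A
  | 0 => 𝒞
  | (n + 1) => fun M _ _ =>
      ∃ (P : Type u) (_ : AddCommGroup P) (_ : Module A P) (f : P →ₗ[A] M),
        Module.Projective A P ∧ Function.Surjective f ∧ DimLE 𝒞 n (LinearMap.ker f)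

/-- The `𝒞`-projective dimension of `M`, as an element of `ℕ∞` (`⊤` playing the role
of `ω`). -/
noncomputable def Dim {A : Type u} [Ring A] (𝒞 : ModClass A) (M : Type u) [AddCommGroup M]
    [Module A M] : ℕ∞ :=
  sInf {d : ℕ∞ | ∃ n : ℕ, d = n ∧ DimLE 𝒞 n M}

/-- The `𝒞`-projective dimension of a class `𝒴` of modules:
`pd_𝒞(𝒴) = sup { pd_𝒞(Y) : Y ∈ 𝒴 }`. -/
noncomputable def DimClass {A : Type u} [Ring A] (𝒞 𝒴 : ModClass A) : ℕ∞ :=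
  sSup {d : ℕ∞ | ∃ (M : Type u) (_ : AddCommGroup M) (_ : Module A M), 𝒴 M ∧ d = Dim 𝒞 M}

/-- The class `Prod(𝒳)` of all modules isomorphic to a direct product of modules in `𝒳`. -/
def ProdClass {A : Type u} [Ring A] (𝒳 : ModClass A) : ModClass A :=
  fun M _ _ => ∃ (I : Type u) (X : I → Type u) (_ : ∀ i, AddCommGroup (X i))
    (_ : ∀ i, Module A (X i)), (∀ i, 𝒳 (X i)) ∧ Nonempty (M ≃ₗ[A] ∀ i, X i)

/-- The class `𝒳` is closed under direct products. -/
def ProdClosed {A : Type u} [Ring A] (𝒳 : ModClass A) : Prop :=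
  ∀ (I : Type u) (X : I → Type u) (_ : ∀ i, AddCommGroup (X i)) (_ : ∀ i, Module A (X i)),
    (∀ i, 𝒳 (X i)) → 𝒳 (∀ i, X i)

/-- The class `𝒳` is closed under direct limits (of directed systems). -/
def DirectLimitClosed {A : Type u} [Ring A] (𝒳 : ModClass A) : Prop :=
  ∀ (ι : Type u) (_ : Preorder ι) (_ : DecidableEq ι) (_ : Nonempty ι)
    (_ : IsDirected ι (· ≤ ·)) (G : ι → Type u) (_ : ∀ i, AddCommGroup (G i))
    (_ : ∀ i, Module A (G i)) (f : ∀ i j, i ≤ j → G i →ₗ[A] G j)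
    (_ : DirectedSystem G fun i j h => f i j h),
    (∀ i, 𝒳 (G i)) → 𝒳 (Module.DirectLimit G f)

variable (R)

/-- A short exact sequence `0 → A → B → C → 0` of right `R`-modules is `𝒮`-pure if for
every `S ∈ 𝒮` the sequence `0 → A ⊗ S → B ⊗ S → C ⊗ S → 0` is exact. -/
def SPureSeq (𝒮 : ModClass R) {M₁ M₂ M₃ : Type u} [AddCommGroup M₁] [Module Rᵐᵒᵖ M₁]
    [AddCommGroup M₂] [Module Rᵐᵒᵖ M₂] [AddCommGroup M₃] [Module Rᵐᵒᵖ M₃]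
    (f : M₁ →ₗ[Rᵐᵒᵖ] M₂) (g : M₂ →ₗ[Rᵐᵒᵖ] M₃) : Prop :=
  ∀ (S : Type u) [AddCommGroup S] [Module R S], 𝒮 S →
    Function.Injective (btMapL R S f) ∧ Function.Exact (btMapL R S f) (btMapL R S g) ∧
      Function.Surjective (btMapL R S g)

/-- A submodule `K ≤ T` is `𝒮`-pure if the sequence `0 → K → T → T/K → 0` is `𝒮`-pure. -/
def SPureSubmodule (𝒮 : ModClass R) (T : Type u) [AddCommGroup T] [Module Rᵐᵒᵖ T]
    (K : Submodule Rᵐᵒᵖ T) : Prop :=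
  SPureSeq R 𝒮 K.subtype K.mkQ

/-- A submodule `K ≤ T` of a right `R`-module is pure if for every left `R`-module `X`
the induced map `K ⊗ X → T ⊗ X` is injective. -/
def PureSubmodule (T : Type u) [AddCommGroup T] [Module Rᵐᵒᵖ T]
    (K : Submodule Rᵐᵒᵖ T) : Prop :=
  ∀ (X : Type u) [AddCommGroup X] [Module R X], Function.Injective (btMapL R X K.subtype)

/-- A left `R`-module `N` is `𝒯`-Mittag-Leffler, for a class `𝒯` of right `R`-modules, if
for every family `{X i}` in `𝒯` the canonical map `(∏ X i) ⊗ N → ∏ (X i ⊗ N)` is injective. -/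
def IsMLLeft (𝒯 : ModClass Rᵐᵒᵖ) (N : Type u) [AddCommGroup N] [Module R N] : Prop :=
  ∀ (I : Type u) (X : I → Type u) (_ : ∀ i, AddCommGroup (X i)) (_ : ∀ i, Module Rᵐᵒᵖ (X i)),
    (∀ i, 𝒯 (X i)) →
    Function.Injective
      (fun (t : BTen R (∀ i, X i) N) (i : I) => btMapL R N (LinearMap.proj i) t)

/-- The class `ML(𝒯)` of `𝒯`-Mittag-Leffler left `R`-modules. -/
def MLClass (𝒯 : ModClass Rᵐᵒᵖ) : ModClass R := fun N _ _ => IsMLLeft R 𝒯 N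

/-- A right `R`-module `M` is `𝒴`-Mittag-Leffler, for a class `𝒴` of left `R`-modules, if
for every family `{Y i}` in `𝒴` the canonical map `M ⊗ (∏ Y i) → ∏ (M ⊗ Y i)` is injective. -/
def IsMLRight (𝒴 : ModClass R) (M : Type u) [AddCommGroup M] [Module Rᵐᵒᵖ M] : Prop :=
  ∀ (I : Type u) (Y : I → Type u) (_ : ∀ i, AddCommGroup (Y i)) (_ : ∀ i, Module R (Y i)),
    (∀ i, 𝒴 (Y i)) →
    Function.Injective
      (fun (t : BTen R M (∀ i, Y i)) (i : I) => btMapR R M (LinearMap.proj i) t)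

/-- A right `R`-module `M` is Mittag-Leffler if it is Mittag-Leffler with respect to the
class of all left `R`-modules. -/
def IsMLRightAll (M : Type u) [AddCommGroup M] [Module Rᵐᵒᵖ M] : Prop :=
  IsMLRight R (fun _ _ _ => True) M

/-- A right `R`-module `M` is flat if tensoring with `M` preserves injectivity of maps of
left `R`-modules. -/
def FlatRight (M : Type u) [AddCommGroup M] [Module Rᵐᵒᵖ M] : Prop :=
  ∀ (N N' : Type u) [AddCommGroup N] [Module R N] [AddCommGroup N'] [Module R N']
    (g : N →ₗ[R] N'), Function.Injective g → Function.Injective (btMapR R M g)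

/-- A left `R`-module `N` is flat if tensoring with `N` preserves injectivity of maps of
right `R`-modules. -/
def FlatLeft (N : Type u) [AddCommGroup N] [Module R N] : Prop :=
  ∀ (M M' : Type u) [AddCommGroup M] [Module Rᵐᵒᵖ M] [AddCommGroup M'] [Module Rᵐᵒᵖ M']
    (f : M →ₗ[Rᵐᵒᵖ] M'), Function.Injective f → Function.Injective (btMapL R N f)

variable {R}

/-- `f : X → M` is an `𝒳`-precover of `M`. -/
def IsPrecover {A : Type u} [Ring A] (𝒳 : ModClass A) {X M : Type u} [AddCommGroup X]
    [Module A X] [AddCommGroup M] [Module A M] (f : X →ₗ[A] M) : Prop :=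
  𝒳 X ∧ ∀ (X' : Type u) [AddCommGroup X'] [Module A X'], 𝒳 X' →
    ∀ g : X' →ₗ[A] M, ∃ h : X' →ₗ[A] X, f ∘ₗ h = g

/-- The class `𝒳` is precovering: every module has an `𝒳`-precover. -/
def Precovering {A : Type u} [Ring A] (𝒳 : ModClass A) : Prop :=
  ∀ (M : Type u) [AddCommGroup M] [Module A M],
    ∃ (X : Type u) (_ : AddCommGroup X) (_ : Module A X) (f : X →ₗ[A] M), IsPrecover 𝒳 f

/-- `g : M → X` is an `𝒳`-preenvelope of `M`. -/
def IsPreenvelope {A : Type u} [Ring A] (𝒳 : ModClass A) {M X : Type u} [AddCommGroup M]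
    [Module A M] [AddCommGroup X] [Module A X] (g : M →ₗ[A] X) : Prop :=
  𝒳 X ∧ ∀ (X' : Type u) [AddCommGroup X'] [Module A X'], 𝒳 X' →
    ∀ h : M →ₗ[A] X', ∃ k : X →ₗ[A] X', k ∘ₗ g = h

/-- The class `𝒳` is preenveloping: every module has an `𝒳`-preenvelope. -/
def Preenveloping {A : Type u} [Ring A] (𝒳 : ModClass A) : Prop :=
  ∀ (M : Type u) [AddCommGroup M] [Module A M],
    ∃ (X : Type u) (_ : AddCommGroup X) (_ : Module A X) (g : M →ₗ[A] X), IsPreenvelope 𝒳 g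

/-- The class `Gen(𝒳)` of modules generated by `𝒳`, i.e. epimorphic images of direct sums
of modules in `𝒳`. -/
def GenClass {A : Type u} [Ring A] (𝒳 : ModClass A) : ModClass A :=
  fun M _ _ => ∃ (I : Type u) (X : I → Type u) (_ : ∀ i, AddCommGroup (X i))
    (_ : ∀ i, Module A (X i)) (φ : DirectSum I X →ₗ[A] M),
      (∀ i, 𝒳 (X i)) ∧ Function.Surjective φ

/-- The trace `t_𝒳(M)` of a class `𝒳` in a module `M`: the sum of the images of all
homomorphisms from members of `𝒳` to `M`. -/
def traceSub {A : Type u} [Ring A] (𝒳 : ModClass A) (M : Type u) [AddCommGroup M]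
    [Module A M] : Submodule A M :=
  sSup {p : Submodule A M | ∃ (X : Type u) (_ : AddCommGroup X) (_ : Module A X)
    (f : X →ₗ[A] M), 𝒳 X ∧ p = LinearMap.range f}

/-- `F` is a continuous (well-ordered, smooth) chain of submodules of `M` of length `len`,
starting at `0` and exhausting `M`. -/
def IsOrdFiltration {A : Type u} [Ring A] {M : Type u} [AddCommGroup M] [Module A M]
    (len : Ordinal.{u}) (F : Ordinal.{u} → Submodule A M) : Prop :=
  F 0 = ⊥ ∧ F len = ⊤ ∧ Monotone F ∧
    ∀ β : Ordinal.{u}, β ≤ len → Order.IsSuccLimit β → F β = ⨆ (α : Ordinal.{u}) (_ : α < β), F α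

/-- The class `Filt-𝒢` of `𝒢`-filtered modules, for a family (set) `𝒢 = (G i)` of modules:
modules admitting a continuous chain of submodules starting at `0`, exhausting the module,
whose consecutive quotients are isomorphic to members of `𝒢`. -/
def FiltClass (A : Type u) [Ring A] {ι : Type u} (G : ι → Type u) [∀ i, AddCommGroup (G i)]
    [∀ i, Module A (G i)] : ModClass A :=
  fun M _ _ => ∃ (len : Ordinal.{u}) (F : Ordinal.{u} → Submodule A M),
    IsOrdFiltration len F ∧ ∀ α : Ordinal.{u}, α < len → ∃ i : ι,
      Nonempty ((↥(F (α + 1)) ⧸ (F α).comap (F (α + 1)).subtype) ≃ₗ[A] G i)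

/-- A class of modules is deconstructible if it is the class of `𝒢`-filtered modules for
some set `𝒢` of modules. -/
def Deconstructible {A : Type u} [Ring A] (𝒳 : ModClass A) : Prop :=
  ∃ (ι : Type u) (G : ι → Type u) (_ : ∀ i, AddCommGroup (G i)) (_ : ∀ i, Module A (G i)),
    ∀ (M : Type u) [AddCommGroup M] [Module A M], 𝒳 M ↔ FiltClass A G M

/-- `Ext¹_A(X, C) = 0`, where `Ext` is computed in the category of `A`-modules. -/
def Ext1Vanish {A : Type u} [Ring A] (X C : Type u) [AddCommGroup X] [Module A X]
    [AddCommGroup C] [Module A C] : Prop :=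
  Limits.IsZero ((((Ext ℤ (ModuleCat.{u} A) 1).obj (Opposite.op (ModuleCat.of A X))).obj
    (ModuleCat.of A C)))

/-- The property `ℙ_λ`: there is an infinite cardinal `κ_λ` such that any submodule of
cardinality at most `λ` of a member of `𝒳` can be enlarged to a submodule in `𝒳` of
cardinality at most `κ_λ`. -/
def PropertyP {A : Type u} [Ring A] (𝒳 : ModClass A) (lam : Cardinal.{u}) : Prop :=
  ∃ κ : Cardinal.{u}, Cardinal.aleph0 ≤ κ ∧
    ∀ (X : Type u) [AddCommGroup X] [Module A X], 𝒳 X →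
      ∀ S : Submodule A X, Cardinal.mk S ≤ lam →
        ∃ Y : Submodule A X, S ≤ Y ∧ 𝒳 Y ∧ Cardinal.mk Y ≤ κ

end Preliminaries

/-!
Tensoring `0 → K → T → T/K → 0` with `S ∈ 𝒮` gives the exact sequence
`Tor₁(T, S) → Tor₁(T/K, S) → K ⊗ S → T ⊗ S`, whose outer terms force `Tor₁(T/K, S) = 0`.
Hence `T/K ∈ 𝒯`, and `K ∈ 𝒯` because `𝒯` is closed under kernels of epimorphisms.

Instead of the long exact Tor sequence we use that, for a projective presentation
`p : P₀ → M`, `Tor₁(M, S)` is the kernel of `ker p ⊗ S → P₀ ⊗ S`. Presenting `T` and `T/K` by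
the same `P₀`, the vanishing for `T/K` becomes a diagram chase over the short exact sequence
`0 → ker p → ker (P₀ → T/K) → K → 0`.
-/

open CategoryTheory.Limits

section ExactSequences

variable {A : Type*} [Ring A] {M₁ M₂ M₃ M₄ : Type*} [AddCommGroup M₁] [Module A M₁]
  [AddCommGroup M₂] [Module A M₂] [AddCommGroup M₃] [Module A M₃] [AddCommGroup M₄] [Module A M₄]

lemma Function.Exact.exact_comp_iff_injective {f : M₁ →ₗ[A] M₂} {g : M₂ →ₗ[A] M₃}
    (hfg : Function.Exact f g) (hg : Function.Surjective g) (i : M₃ →ₗ[A] M₄) :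
    Function.Exact f (i ∘ₗ g) ↔ Function.Injective i := by
  refine ⟨fun h => (injective_iff_map_eq_zero i).2 fun c hc => ?_,
    fun hi => hi.comp_exact_iff_exact.2 hfg⟩
  obtain ⟨b, rfl⟩ := hg c
  obtain ⟨a, rfl⟩ := (h b).1 hc
  exact hfg.apply_apply_eq_zero a

lemma injective_of_exact_of_injective {N N' : Type*} [AddCommGroup N] [Module A N]
    [AddCommGroup N'] [Module A N'] {f : M₁ →ₗ[A] M₂} {g : M₂ →ₗ[A] M₃} (hfg : Function.Exact f g)
    {i₁ : M₁ →ₗ[A] N} {i₂ : M₂ →ₗ[A] N} {i₃ : M₃ →ₗ[A] N'} (q : N →ₗ[A] N')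
    (h₁ : i₂ ∘ₗ f = i₁) (h₃ : i₃ ∘ₗ g = q ∘ₗ i₂)
    (hi₁ : Function.Injective i₁) (hi₃ : Function.Injective i₃) : Function.Injective i₂ := by
  refine (injective_iff_map_eq_zero i₂).2 fun b hb => ?_
  have hgb : g b = 0 := hi₃ <| by
    rw [map_zero, ← LinearMap.comp_apply, h₃, LinearMap.comp_apply, hb, map_zero]
  obtain ⟨a, rfl⟩ := (hfg b).1 hgb
  have ha : a = 0 := hi₁ (by rw [map_zero, ← h₁, LinearMap.comp_apply, hb])
  rw [ha, map_zero]

end ExactSequences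

universe v w

namespace CategoryTheory

lemma ProjectiveResolution.isZero_leftDerived_obj_iff_exactAt {C D : Type*} [Category C]
    [Abelian C] [HasProjectiveResolutions C] [Category D] [Abelian D] {X : C}
    (P : ProjectiveResolution X) (F : C ⥤ D) [F.Additive] (n : ℕ) :
    IsZero ((F.leftDerived n).obj X) ↔
      ((F.mapHomologicalComplex (ComplexShape.down ℕ)).obj P.complex).ExactAt n := by
  rw [HomologicalComplex.exactAt_iff_isZero_homology]
  exact (P.isoLeftDerivedObj F n).isZero_iff

variable {C : Type w} [Category.{v} C] [Abelian C] [EnoughProjectives C]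

lemma Projective.d_comp {X Y : C} (f : X ⟶ Y) : Projective.d f ≫ f = 0 := by
  show (Projective.π _ ≫ kernel.ι f) ≫ f = 0
  rw [Category.assoc, kernel.condition, comp_zero]

namespace ProjectiveResolution

/-- The complex of `ProjectiveResolution.of Z`, started from a given epimorphism `p` instead of
`Projective.π Z`. -/
noncomputable def ofEpiComplex {Z P : C} [Projective P] (p : P ⟶ Z) : ChainComplex C ℕ :=
  ChainComplex.mk' P (Projective.syzygies p) (Projective.d p)
    (fun f => ⟨_, Projective.d f, Projective.d_comp f⟩)

lemma ofEpiComplex_d_1_0 {Z P : C} [Projective P] (p : P ⟶ Z) :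
    (ofEpiComplex p).d 1 0 = Projective.d p := by
  simp [ofEpiComplex]

lemma ofEpiComplex_exactAt_succ {Z P : C} [Projective P] (p : P ⟶ Z) (n : ℕ) :
    (ofEpiComplex p).ExactAt (n + 1) := by
  rw [HomologicalComplex.exactAt_iff' _ (n + 2) (n + 1) n (by simp) (by simp)]
  set d := (ofEpiComplex p).d (n + 1) n
  obtain ⟨e, he⟩ : ∃ e : (ofEpiComplex p).X (n + 2) ≅ Projective.syzygies d,
      (ofEpiComplex p).d (n + 2) (n + 1) = e.hom ≫ Projective.d d :=
    ⟨_, ChainComplex.mk'_d _ _ _ _ n⟩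
  refine ShortComplex.exact_of_iso
    (ShortComplex.isoMk (S₁ := ShortComplex.mk _ _ (Projective.d_comp d))
      e.symm (Iso.refl _) (Iso.refl _) ?_ ?_) (exact_d_f d)
  · change e.inv ≫ (ofEpiComplex p).d (n + 2) (n + 1) = _
    rw [he, Iso.inv_hom_id_assoc]
    exact (Category.comp_id _).symm
  · exact (Category.id_comp _).trans (Category.comp_id _).symm

instance {Z P : C} [Projective P] (p : P ⟶ Z) (n : ℕ) : Projective ((ofEpiComplex p).X n) := by
  obtain (_ | _ | _ | n) := n
  · exact inferInstanceAs (Projective P)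
  all_goals apply Projective.projective_over

noncomputable def ofEpi {Z P : C} [Projective P] (p : P ⟶ Z) [Epi p] :
    ProjectiveResolution Z where
  complex := ofEpiComplex p
  π := (ChainComplex.toSingle₀Equiv _ _).symm
    ⟨p, by rw [ofEpiComplex_d_1_0]; exact Projective.d_comp p⟩
  quasiIso := ⟨fun n => by
    cases n
    · rw [ChainComplex.quasiIsoAt₀_iff, ShortComplex.quasiIso_iff_of_zeros']
      · refine (ShortComplex.exact_and_epi_g_iff_of_iso ?_).2
          ⟨exact_d_f p, by dsimp; infer_instance⟩
        exact ShortComplex.isoMk (Iso.refl _) (Iso.refl _) (Iso.refl _)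
          (by erw [Category.id_comp, Category.comp_id]; exact (ofEpiComplex_d_1_0 p).symm)
          (by
            erw [Category.id_comp, Category.comp_id]
            exact (ChainComplex.toSingle₀Equiv_symm_apply_f_zero (C := ofEpiComplex p) p _).symm)
      all_goals rfl
    · rw [quasiIsoAt_iff_exactAt']
      · apply ofEpiComplex_exactAt_succ
      · apply ChainComplex.exactAt_succ_single_obj⟩

lemma ofEpi_π_f_zero {Z P : C} [Projective P] (p : P ⟶ Z) [Epi p] : (ofEpi p).π.f 0 = p :=
  ChainComplex.toSingle₀Equiv_symm_apply_f_zero _ _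

end ProjectiveResolution

end CategoryTheory

section BalancedTensor

variable {R : Type u} [Ring R] (N : Type u) [AddCommGroup N] [Module R N]
  {M₁ M₂ M₃ : Type u} [AddCommGroup M₁] [Module Rᵐᵒᵖ M₁]
  [AddCommGroup M₂] [Module Rᵐᵒᵖ M₂] [AddCommGroup M₃] [Module Rᵐᵒᵖ M₃]

lemma btMapL_mk (f : M₁ →ₗ[Rᵐᵒᵖ] M₂) (x : M₁ ⊗[ℤ] N) :
    btMapL R N f (Submodule.Quotient.mk x) =
      Submodule.Quotient.mk (f.toAddMonoidHom.toIntLinearMap.rTensor N x) :=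
  rfl

lemma btMapL_comp (f : M₁ →ₗ[Rᵐᵒᵖ] M₂) (g : M₂ →ₗ[Rᵐᵒᵖ] M₃) :
    btMapL R N (g ∘ₗ f) = btMapL R N g ∘ₗ btMapL R N f :=
  Submodule.linearMap_qext _ (TensorProduct.ext' fun _ _ => rfl)

lemma btMapL_zero : btMapL R N (0 : M₁ →ₗ[Rᵐᵒᵖ] M₂) = 0 :=
  Submodule.linearMap_qext _ (TensorProduct.ext' fun m n => by
    change Submodule.Quotient.mk ((0 : M₁ →ₗ[Rᵐᵒᵖ] M₂) m ⊗ₜ[ℤ] n) = (0 : BTen R M₂ N)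
    rw [LinearMap.zero_apply, TensorProduct.zero_tmul, Submodule.Quotient.mk_zero])

lemma btMapL_surjective {g : M₂ →ₗ[Rᵐᵒᵖ] M₃} (hg : Function.Surjective g) :
    Function.Surjective (btMapL R N g) := by
  intro z
  obtain ⟨x, rfl⟩ := Submodule.Quotient.mk_surjective _ z
  obtain ⟨y, rfl⟩ := LinearMap.rTensor_surjective N (g := g.toAddMonoidHom.toIntLinearMap) hg x
  exact ⟨Submodule.Quotient.mk y, rfl⟩

lemma torRel_le_map {g : M₂ →ₗ[Rᵐᵒᵖ] M₃} (hg : Function.Surjective g) :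
    torRel R M₃ N ≤ (torRel R M₂ N).map (g.toAddMonoidHom.toIntLinearMap.rTensor N) := by
  refine Submodule.span_le.mpr ?_
  rintro _ ⟨r, m₃, n, rfl⟩
  obtain ⟨m₂, rfl⟩ := hg m₃
  exact ⟨_, Submodule.subset_span ⟨r, m₂, n, rfl⟩, by simp [map_smul]⟩

lemma btMapL_exact {f : M₁ →ₗ[Rᵐᵒᵖ] M₂} {g : M₂ →ₗ[Rᵐᵒᵖ] M₃}
    (hfg : Function.Exact f g) (hg : Function.Surjective g) :
    Function.Exact (btMapL R N f) (btMapL R N g) := by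
  refine Function.Exact.of_comp_of_mem_range ?_ fun z hz => ?_
  · rw [← LinearMap.coe_comp, ← btMapL_comp, hfg.linearMap_comp_eq_zero, btMapL_zero]
    rfl
  obtain ⟨x, rfl⟩ := Submodule.Quotient.mk_surjective _ z
  rw [btMapL_mk, Submodule.Quotient.mk_eq_zero] at hz
  obtain ⟨y, hy, hyx⟩ := torRel_le_map N hg hz
  obtain ⟨w, hw⟩ := (rTensor_exact (f := f.toAddMonoidHom.toIntLinearMap)
    (g := g.toAddMonoidHom.toIntLinearMap) N hfg hg (x - y)).mp (by rw [map_sub, hyx, sub_self])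
  refine ⟨Submodule.Quotient.mk w, ?_⟩
  rw [btMapL_mk, hw, Submodule.Quotient.mk_sub, (Submodule.Quotient.mk_eq_zero _).mpr hy, sub_zero]

end BalancedTensor

section Tor

variable {R : Type u} [Ring R] (S : Type u) [AddCommGroup S] [Module R S]

lemma btMapL_exact_iff_injective_ker_subtype {M₁ M₂ M₃ M₄ : Type u} [AddCommGroup M₁]
    [Module Rᵐᵒᵖ M₁] [AddCommGroup M₂] [Module Rᵐᵒᵖ M₂] [AddCommGroup M₃] [Module Rᵐᵒᵖ M₃]
    [AddCommGroup M₄] [Module Rᵐᵒᵖ M₄] {f : M₁ →ₗ[Rᵐᵒᵖ] M₂} {g : M₂ →ₗ[Rᵐᵒᵖ] M₃}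
    {h : M₃ →ₗ[Rᵐᵒᵖ] M₄} (hfg : Function.Exact f g) (hgh : Function.Exact g h) :
    Function.Exact (btMapL R S f) (btMapL R S g) ↔
      Function.Injective (btMapL R S (LinearMap.ker h).subtype) := by
  let ρ : M₂ →ₗ[Rᵐᵒᵖ] LinearMap.ker h := g.codRestrict _ hgh.apply_apply_eq_zero
  have hρ : Function.Surjective ρ := fun ⟨c, hc⟩ =>
    let ⟨b, hb⟩ := (hgh c).1 hc
    ⟨b, Subtype.ext hb⟩
  have hfρ : Function.Exact f ρ := (Submodule.injective_subtype _).comp_exact_iff_exact.1 hfg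
  rw [show g = (LinearMap.ker h).subtype ∘ₗ ρ from rfl, btMapL_comp]
  exact (btMapL_exact S hfρ hρ).exact_comp_iff_injective (btMapL_surjective S hρ) _

lemma torVanish_one_iff_of_projectiveResolution {M : Type u} [AddCommGroup M] [Module Rᵐᵒᵖ M]
    (P : ProjectiveResolution (ModuleCat.of Rᵐᵒᵖ M)) :
    TorVanish R 1 M S ↔
      Function.Injective (btMapL R S (LinearMap.ker (P.π.f 0).hom).subtype) := by
  have h₀ : Function.Exact (P.complex.d 1 0).hom (P.π.f 0).hom :=
    (ShortComplex.ShortExact.moduleCat_exact_iff_function_exact _).1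
      (ShortComplex.exact_of_g_is_cokernel (ShortComplex.mk _ _ P.complex_d_comp_π_f_zero)
        P.isColimitCokernelCofork)
  have h₁ : Function.Exact (P.complex.d 2 1).hom (P.complex.d 1 0).hom :=
    (ShortComplex.ShortExact.moduleCat_exact_iff_function_exact _).1 (P.exact_succ 0)
  rw [TorVanish, P.isZero_leftDerived_obj_iff_exactAt,
    HomologicalComplex.exactAt_iff' _ 2 1 0 (by simp) (by simp),
    ShortComplex.ShortExact.moduleCat_exact_iff_function_exact]
  exact btMapL_exact_iff_injective_ker_subtype S h₁ h₀

lemma torVanish_one_iff {M P₀ : Type u} [AddCommGroup M] [Module Rᵐᵒᵖ M] [AddCommGroup P₀]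
    [Module Rᵐᵒᵖ P₀] [Module.Projective Rᵐᵒᵖ P₀] {p : P₀ →ₗ[Rᵐᵒᵖ] M} (hp : Function.Surjective p) :
    TorVanish R 1 M S ↔ Function.Injective (btMapL R S (LinearMap.ker p).subtype) := by
  have : Projective (ModuleCat.of Rᵐᵒᵖ P₀) := (IsProjective.iff_projective P₀).mp ‹_›
  have : Epi (ModuleCat.ofHom p) := (ModuleCat.epi_iff_surjective _).mpr hp
  rw [torVanish_one_iff_of_projectiveResolution S (ProjectiveResolution.ofEpi (ModuleCat.ofHom p)),
    ProjectiveResolution.ofEpi_π_f_zero]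
  rfl

end Tor

lemma injective_btMapL_comap_subtype {R : Type u} [Ring R] (S : Type u) [AddCommGroup S]
    [Module R S] {T P₀ : Type u} [AddCommGroup T] [Module Rᵐᵒᵖ T] [AddCommGroup P₀]
    [Module Rᵐᵒᵖ P₀] (K : Submodule Rᵐᵒᵖ T) {p : P₀ →ₗ[Rᵐᵒᵖ] T} (hp : Function.Surjective p)
    (hK : Function.Injective (btMapL R S K.subtype))
    (hker : Function.Injective (btMapL R S (LinearMap.ker p).subtype)) :
    Function.Injective (btMapL R S (K.comap p).subtype) := by
  have hle : LinearMap.ker p ≤ K.comap p := Submodule.comap_mono bot_le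
  let j : K.comap p →ₗ[Rᵐᵒᵖ] K := p.restrict fun _ hx => hx
  have hj : Function.Surjective j := fun ⟨k, hk⟩ =>
    let ⟨y, hy⟩ := hp k
    ⟨⟨y, show p y ∈ K from hy ▸ hk⟩, Subtype.ext hy⟩
  have hexact : Function.Exact (Submodule.inclusion hle) j := fun x =>
    ⟨fun h => ⟨⟨x, congrArg Subtype.val h⟩, rfl⟩, by rintro ⟨y, rfl⟩; exact Subtype.ext y.2⟩
  exact injective_of_exact_of_injective (btMapL_exact S hexact hj) (btMapL R S p)
    (by rw [← btMapL_comp]; rfl) (by rw [← btMapL_comp, ← btMapL_comp]; rfl) hker hK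

/-- Let `(𝒯, 𝒮)` be a hereditary Tor-pair. If `T ∈ 𝒯` and `K` is an
`𝒮`-pure submodule of `T`, then `K ∈ 𝒯`. -/
theorem stmt2 (R : Type u) [Ring R] (𝒯 : ModClass Rᵐᵒᵖ) (𝒮 : ModClass R)
    (htor : IsTorPair R 𝒯 𝒮) (hher : Resolving 𝒯)
    (T : Type u) [AddCommGroup T] [Module Rᵐᵒᵖ T] (hT : 𝒯 T)
    (K : Submodule Rᵐᵒᵖ T) (hK : SPureSubmodule R 𝒮 T K) : 𝒯 K := by
  obtain ⟨p, hp⟩ : ∃ p : (T →₀ Rᵐᵒᵖ) →ₗ[Rᵐᵒᵖ] T, Function.Surjective p :=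
    ⟨Finsupp.linearCombination Rᵐᵒᵖ id, fun t => ⟨Finsupp.single t 1, by simp⟩⟩
  have hq : Function.Surjective (K.mkQ ∘ₗ p) := K.mkQ_surjective.comp hp
  have hquot : 𝒯 (T ⧸ K) := (htor.1 _).2 fun S _ _ hS => by
    rw [torVanish_one_iff S hq, LinearMap.ker_comp, Submodule.ker_mkQ]
    exact injective_btMapL_comap_subtype S K hp (hK S hS).1
      ((torVanish_one_iff S hp).1 ((htor.1 T).1 hT S hS))
  have hker := hher.2.2 T (T ⧸ K) K.mkQ K.mkQ_surjective hT hquot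
  rwa [Submodule.ker_mkQ] at hker
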